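/- arXiv:math/9804132 — 3 statements merged into one kernel-verified Lean document; each statement's English description precedes it below -/
import Mathlib

section
/- Define the derivation D on ℂ(α₀,α₁,α₂,f₀,f₁,f₂) by D(f₀) = f₀(f₁ - f₂) + α₀, D(f₁) = f₁(f₂ - f₀) + α₁, D(f₂) = f₂(f₀ - f₁) + α₂, and D(α_i) = 0 for i = 0,1,2. Then D commutes with the automorphism s₁ of the A₂^(1) representation on the f-variables in the following sense: D(s₁(f₀)) = s₁(D(f₀)), D(s₁(f₁)) = s₁(D(f₁)), D(s₁(f₂)) = s₁(D(f₂)). -/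
set_option maxHeartbeats 2000000
set_option synthInstance.maxHeartbeats 2000000


/-- The field ℂ(α₀, α₁, α₂, f₀, f₁, f₂) of rational functions. -/
noncomputable abbrev K : Type := FractionRing (MvPolynomial (Fin 6) ℂ)

noncomputable def gen (i : Fin 6) : K :=
  algebraMap (MvPolynomial (Fin 6) ℂ) K (MvPolynomial.X i)

/-- α₀, α₁, α₂. -/
noncomputable def a (i : Fin 3) : K := gen (Fin.castAdd 3 i)

/-- f₀, f₁, f₂. -/
noncomputable def f (i : Fin 3) : K := gen (Fin.natAdd 3 i)

/-- the derivation of the symmetric form of Painlevé IV commutes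
with the Bäcklund transformation s₁ on each generator fⱼ. -/
theorem stmt6 (D : Derivation ℂ K K) (s₁ : K ≃ₐ[ℂ] K)
    (hD0 : D (f 0) = f 0 * (f 1 - f 2) + a 0)
    (hD1 : D (f 1) = f 1 * (f 2 - f 0) + a 1)
    (hD2 : D (f 2) = f 2 * (f 0 - f 1) + a 2)
    (hDa : ∀ i : Fin 3, D (a i) = 0)
    (h1a1 : s₁ (a 1) = -a 1) (h1a0 : s₁ (a 0) = a 0 + a 1) (h1a2 : s₁ (a 2) = a 2 + a 1)
    (h1f1 : s₁ (f 1) = f 1) (h1f2 : s₁ (f 2) = f 2 + a 1 / f 1)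
    (h1f0 : s₁ (f 0) = f 0 - a 1 / f 1) :
    D (s₁ (f 0)) = s₁ (D (f 0)) ∧ D (s₁ (f 1)) = s₁ (D (f 1)) ∧
      D (s₁ (f 2)) = s₁ (D (f 2)) := by
  have hf1 : f 1 ≠ 0 := by
    simpa [f, gen] using
      (map_ne_zero_iff _ (IsFractionRing.injective (MvPolynomial (Fin 6) ℂ) K)).mpr
        (MvPolynomial.X_ne_zero (R := ℂ) (Fin.natAdd 3 1))
  have hdiv : D (a 1 / f 1) = - (a 1 * D (f 1)) / (f 1) ^ 2 := by
    rw [Derivation.leibniz_div, hDa 1]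
    simp only [smul_zero, zero_sub, smul_eq_mul]
    field_simp
    ring
  refine ⟨?_, ?_, ?_⟩
  · rw [h1f0, map_sub, hdiv, hD0, hD1, map_add, map_mul, map_sub, h1f0, h1f1, h1f2, h1a0]
    revert hf1
    generalize f 0 = x0; generalize f 1 = x1; generalize f 2 = x2
    generalize a 0 = b0; generalize a 1 = b1
    intro h
    field_simp
    ring
  · rw [h1f1, hD1, map_add, map_mul, map_sub, h1f1, h1f2, h1f0, h1a1]
    revert hf1
    generalize f 0 = x0; generalize f 1 = x1; generalize f 2 = x2
    generalize a 1 = b1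
    intro h
    field_simp
    ring
  · rw [h1f2, map_add, hdiv, hD2, hD1, map_add, map_mul, map_sub, h1f2, h1f0, h1f1, h1a2]
    revert hf1
    generalize f 0 = x0; generalize f 1 = x1; generalize f 2 = x2
    generalize a 1 = b1; generalize a 2 = b2
    intro h
    field_simp
    ring
end

section
/- In the A₂^(1) representation, with T = π s₂ s₁ and c = f₀+f₁+f₂, the identities T⁻¹(f₀) + f₀ = c - f₁ + α₁/f₁ and f₁ + T(f₁) = c - f₀ - α₀/f₀ hold in ℂ(α₀,α₁,α₂,f₀,f₁,f₂). -/
set_option maxHeartbeats 2000000 in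
/-- the discrete Painlevé II equations
T⁻¹(f₀) + f₀ = c - f₁ + α₁/f₁ and f₁ + T(f₁) = c - f₀ - α₀/f₀,
where T = π s₂ s₁ and c = f₀ + f₁ + f₂. -/
theorem stmt10 (s₀ s₁ s₂ π : K ≃ₐ[ℂ] K)
    (h0a0 : s₀ (a 0) = -a 0) (h0a1 : s₀ (a 1) = a 1 + a 0) (h0a2 : s₀ (a 2) = a 2 + a 0)
    (h0f0 : s₀ (f 0) = f 0) (h0f1 : s₀ (f 1) = f 1 + a 0 / f 0)
    (h0f2 : s₀ (f 2) = f 2 - a 0 / f 0)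
    (h1a1 : s₁ (a 1) = -a 1) (h1a2 : s₁ (a 2) = a 2 + a 1) (h1a0 : s₁ (a 0) = a 0 + a 1)
    (h1f1 : s₁ (f 1) = f 1) (h1f2 : s₁ (f 2) = f 2 + a 1 / f 1)
    (h1f0 : s₁ (f 0) = f 0 - a 1 / f 1)
    (h2a2 : s₂ (a 2) = -a 2) (h2a0 : s₂ (a 0) = a 0 + a 2) (h2a1 : s₂ (a 1) = a 1 + a 2)
    (h2f2 : s₂ (f 2) = f 2) (h2f0 : s₂ (f 0) = f 0 + a 2 / f 2)
    (h2f1 : s₂ (f 1) = f 1 - a 2 / f 2)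
    (hp0 : π (a 0) = a 1) (hp1 : π (a 1) = a 2) (hp2 : π (a 2) = a 0)
    (hq0 : π (f 0) = f 1) (hq1 : π (f 1) = f 2) (hq2 : π (f 2) = f 0) :
    s₁ (s₂ (π.symm (f 0))) + f 0 = (f 0 + f 1 + f 2) - f 1 + a 1 / f 1 ∧
      f 1 + π (s₂ (s₁ (f 1))) = (f 0 + f 1 + f 2) - f 0 - a 0 / f 0 := by
  constructor
  · have h : π.symm (f 0) = f 2 := by rw [← hq2, AlgEquiv.symm_apply_apply]
    rw [h, h2f2, h1f2]; ring
  · rw [h1f1, h2f1, map_sub, map_div₀, hp2, hq1, hq2]; ring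
end

section
/- In the A₂^(1) representation, with T = π s₂ s₁, the reflections r₀ = s₀ s₁ s₀ and r₁ = s₂ each commute with T: r₀ T = T r₀ and r₁ T = T r₁ as automorphisms of ℂ(α₀,α₁,α₂,f₀,f₁,f₂). -/
theorem FractionRing.mvPolynomial_algHom_ext {R σ B : Type*} [CommRing R] [Semiring B]
    [Algebra R B] {φ ψ : FractionRing (MvPolynomial σ R) →ₐ[R] B}
    (h : ∀ i, φ (algebraMap (MvPolynomial σ R) _ (MvPolynomial.X i)) =
      ψ (algebraMap (MvPolynomial σ R) _ (MvPolynomial.X i))) :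
    φ = ψ :=
  IsLocalization.algHom_ext (nonZeroDivisors _) (MvPolynomial.algHom_ext h)

/-- The `f`-components of the braid relation `s_i s_{i+1} s_i = s_{i+1} s_i s_{i+1}`, with
`x = f_i`, `y = f_{i+1}`, `z = f_{i+2}`, `α = α_i`, `β = α_{i+1}`. -/
theorem braid_identities {F : Type*} [Field F] {x y α β : F} (z : F) (hx : x ≠ 0) (hy : y ≠ 0)
    (hP : x * y + α ≠ 0) (hQ : x * y - β ≠ 0) :
    x - (β + α) / (y + α / x) = x - β / y - α / (y + (α + β) / (x - β / y)) ∧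
    y + α / x + β / (x - (β + α) / (y + α / x)) = y + (α + β) / (x - β / y) ∧
    z - α / x + (β + α) / (y + α / x) - β / (x - (β + α) / (y + α / x)) =
      z + β / y - (α + β) / (x - β / y) + α / (y + (α + β) / (x - β / y)) := by
  have e₁ : y + α / x = (x * y + α) / x := by field_simp
  have e₂ : x - β / y = (x * y - β) / y := by field_simp
  have e₃ : x - (β + α) / ((x * y + α) / x) = x * (x * y - β) / (x * y + α) := by
    field_simp; ring
  have e₄ : y + (α + β) / ((x * y - β) / y) = y * (x * y + α) / (x * y - β) := by
    rw [div_div_eq_mul_div, eq_div_iff hQ, add_mul, div_mul_cancel₀ _ hQ]; ring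
  rw [e₁, e₂, e₃, e₄]
  refine ⟨?_, ?_, ?_⟩ <;> field_simp <;> ring

theorem f_ne_zero (i : Fin 3) : f i ≠ 0 :=
  (map_ne_zero_iff _ (IsFractionRing.injective _ K)).2 (MvPolynomial.X_ne_zero _)

theorem algEquiv_ext_add (i : Fin 3) {e₁ e₂ : K ≃ₐ[ℂ] K}
    (ha : ∀ k, e₁ (a (i + k)) = e₂ (a (i + k))) (hf : ∀ k, e₁ (f (i + k)) = e₂ (f (i + k))) :
    e₁ = e₂ :=
  AlgEquiv.coe_toAlgHom_injective <| FractionRing.mvPolynomial_algHom_ext fun n =>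
    Fin.addCases (m := 3) (n := 3) (motive := fun n => e₁ (gen n) = e₂ (gen n))
      (fun j => by rw [← add_sub_cancel i j]; exact ha (j - i))
      (fun j => by rw [← add_sub_cancel i j]; exact hf (j - i)) n

/-- The Noumi–Yamada action of `s_i` on the generators; indices live in `Fin 3`, so `i + 2` is
`i - 1`. -/
structure IsNYReflection (s : K ≃ₐ[ℂ] K) (i : Fin 3) : Prop where
  map_a_self : s (a i) = -a i
  map_a_succ : s (a (i + 1)) = a (i + 1) + a i
  map_a_pred : s (a (i + 2)) = a (i + 2) + a i
  map_f_self : s (f i) = f i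
  map_f_succ : s (f (i + 1)) = f (i + 1) + a i / f i
  map_f_pred : s (f (i + 2)) = f (i + 2) - a i / f i

structure IsNYRotation (π : K ≃ₐ[ℂ] K) : Prop where
  map_a : ∀ j, π (a j) = a (j + 1)
  map_f : ∀ j, π (f j) = f (j + 1)

namespace IsNYReflection

variable {s t π : K ≃ₐ[ℂ] K} {i : Fin 3}

theorem map_of_succ (ht : IsNYReflection t (i + 1)) :
    t (a (i + 2)) = a (i + 2) + a (i + 1) ∧ t (a i) = a i + a (i + 1) ∧
      t (f (i + 2)) = f (i + 2) + a (i + 1) / f (i + 1) ∧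
      t (f i) = f i - a (i + 1) / f (i + 1) := by
  obtain ⟨-, ha₁, ha₂, -, hf₁, hf₂⟩ := ht
  simp only [add_assoc, Fin.reduceAdd, add_zero] at ha₁ ha₂ hf₁ hf₂
  exact ⟨ha₁, ha₂, hf₁, hf₂⟩

theorem mul_self (hs : IsNYReflection s i) : s * s = 1 := by
  refine algEquiv_ext_add i (fun k => ?_) (fun k => ?_) <;> fin_cases k
  all_goals
    simp only [Fin.zero_eta, Fin.mk_one, Fin.reduceFinMk, Fin.isValue, add_zero,
      AlgEquiv.mul_apply, AlgEquiv.one_apply, map_add, map_sub, map_neg, map_div₀, hs.map_a_self,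
      hs.map_a_succ, hs.map_a_pred, hs.map_f_self, hs.map_f_succ, hs.map_f_pred]
  all_goals ring

theorem mul_rotation (hs : IsNYReflection s i) (ht : IsNYReflection t (i + 1))
    (hπ : IsNYRotation π) : t * π = π * s := by
  obtain ⟨ta, ta', tf, tf'⟩ := ht.map_of_succ
  refine algEquiv_ext_add i (fun k => ?_) (fun k => ?_) <;> fin_cases k
  all_goals
    simp only [Fin.zero_eta, Fin.mk_one, Fin.reduceFinMk, Fin.isValue, add_zero, add_assoc,
      Fin.reduceAdd, AlgEquiv.mul_apply, map_add, map_sub, map_neg, map_div₀, hs.map_a_self,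
      hs.map_a_succ, hs.map_a_pred, hs.map_f_self, hs.map_f_succ, hs.map_f_pred, ht.map_a_self,
      ht.map_f_self, ta, ta', tf, tf', hπ.map_a, hπ.map_f]

theorem braid (hs : IsNYReflection s i) (ht : IsNYReflection t (i + 1)) :
    s * t * s = t * s * t := by
  obtain ⟨ta, ta', tf, tf'⟩ := ht.map_of_succ
  have hx := f_ne_zero i
  have hy := f_ne_zero (i + 1)
  have hP : f i * f (i + 1) + a i ≠ 0 := by
    have h : f i * s (f (i + 1)) = f i * f (i + 1) + a i := by
      rw [hs.map_f_succ, mul_add, mul_div_cancel₀ _ hx]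
    exact h ▸ mul_ne_zero hx ((map_ne_zero s).2 hy)
  have hQ : f i * f (i + 1) - a (i + 1) ≠ 0 := by
    have h : t (f i) * f (i + 1) = f i * f (i + 1) - a (i + 1) := by
      rw [tf', sub_mul, div_mul_cancel₀ _ hy]
    exact h ▸ mul_ne_zero ((map_ne_zero t).2 hx) hy
  obtain ⟨h₀, h₁, h₂⟩ := braid_identities (f (i + 2)) hx hy hP hQ
  refine algEquiv_ext_add i (fun k => ?_) (fun k => ?_) <;> fin_cases k
  all_goals
    simp only [Fin.zero_eta, Fin.mk_one, Fin.reduceFinMk, Fin.isValue, add_zero,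
      AlgEquiv.mul_apply, map_add, map_sub, map_neg, map_div₀, hs.map_a_self,
      hs.map_a_succ, hs.map_a_pred, hs.map_f_self, hs.map_f_succ, hs.map_f_pred, ht.map_a_self,
      ht.map_f_self, ta, ta', tf, tf', neg_add_cancel_comm_assoc]
  exacts [by ring, by ring, by ring, h₀, h₁, h₂]

end IsNYReflection

/-- the reflections r₀ = s₀s₁s₀ and r₁ = s₂ commute with the
shift operator T = π s₂ s₁. -/
theorem stmt11 (s₀ s₁ s₂ π : K ≃ₐ[ℂ] K)
    (h0a0 : s₀ (a 0) = -a 0) (h0a1 : s₀ (a 1) = a 1 + a 0) (h0a2 : s₀ (a 2) = a 2 + a 0)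
    (h0f0 : s₀ (f 0) = f 0) (h0f1 : s₀ (f 1) = f 1 + a 0 / f 0)
    (h0f2 : s₀ (f 2) = f 2 - a 0 / f 0)
    (h1a1 : s₁ (a 1) = -a 1) (h1a2 : s₁ (a 2) = a 2 + a 1) (h1a0 : s₁ (a 0) = a 0 + a 1)
    (h1f1 : s₁ (f 1) = f 1) (h1f2 : s₁ (f 2) = f 2 + a 1 / f 1)
    (h1f0 : s₁ (f 0) = f 0 - a 1 / f 1)
    (h2a2 : s₂ (a 2) = -a 2) (h2a0 : s₂ (a 0) = a 0 + a 2) (h2a1 : s₂ (a 1) = a 1 + a 2)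
    (h2f2 : s₂ (f 2) = f 2) (h2f0 : s₂ (f 0) = f 0 + a 2 / f 2)
    (h2f1 : s₂ (f 1) = f 1 - a 2 / f 2)
    (hp0 : π (a 0) = a 1) (hp1 : π (a 1) = a 2) (hp2 : π (a 2) = a 0)
    (hq0 : π (f 0) = f 1) (hq1 : π (f 1) = f 2) (hq2 : π (f 2) = f 0) :
    (∀ x : K, s₀ (s₁ (s₀ (π (s₂ (s₁ x))))) = π (s₂ (s₁ (s₀ (s₁ (s₀ x)))))) ∧
      (∀ x : K, s₂ (π (s₂ (s₁ x))) = π (s₂ (s₁ (s₂ x)))) := by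
  have hs₀ : IsNYReflection s₀ 0 := ⟨h0a0, h0a1, h0a2, h0f0, h0f1, h0f2⟩
  have hs₁ : IsNYReflection s₁ 1 := ⟨h1a1, h1a2, h1a0, h1f1, h1f2, h1f0⟩
  have hs₂ : IsNYReflection s₂ 2 := ⟨h2a2, h2a0, h2a1, h2f2, h2f0, h2f1⟩
  have hπ : IsNYRotation π :=
    ⟨fun j => by fin_cases j <;> assumption, fun j => by fin_cases j <;> assumption⟩
  have c₀ : ∀ x, s₀ (π x) = π (s₂ x) := AlgEquiv.ext_iff.1 (hs₂.mul_rotation hs₀ hπ)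
  have c₁ : ∀ x, s₁ (π x) = π (s₀ x) := AlgEquiv.ext_iff.1 (hs₀.mul_rotation hs₁ hπ)
  have c₂ : ∀ x, s₂ (π x) = π (s₁ x) := AlgEquiv.ext_iff.1 (hs₁.mul_rotation hs₂ hπ)
  have inv₀ : ∀ x, s₀ (s₀ x) = x := AlgEquiv.ext_iff.1 hs₀.mul_self
  have inv₂ : ∀ x, s₂ (s₂ x) = x := AlgEquiv.ext_iff.1 hs₂.mul_self
  have braid₀₁ : ∀ x, s₀ (s₁ (s₀ x)) = s₁ (s₀ (s₁ x)) := AlgEquiv.ext_iff.1 (hs₀.braid hs₁)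
  have braid₁₂ : ∀ x, s₁ (s₂ (s₁ x)) = s₂ (s₁ (s₂ x)) := AlgEquiv.ext_iff.1 (hs₁.braid hs₂)
  refine ⟨fun x => ?_, fun x => ?_⟩
  · rw [c₀, inv₂, c₁, c₀, ← braid₀₁, inv₀]
  · rw [c₂, braid₁₂]
end
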